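/- Let D be a triangulated category and (E_0, ..., E_r) a strong exceptional collection in D. If the right orthogonal complement ⟨E_0, ..., E_r⟩^⊥ = 0 (i.e., any object F with Hom(E_i[k], F) = 0 for all i and all shifts k must be zero), then the smallest full triangulated subcategory containing E_0, ..., E_r and closed under direct summands is all of D; that is, the collection is full. -/

import Mathlib

/-!
By induction on `t`, every object right orthogonal to `E_t, …, E_r` lies in `⟨E⟩`: for `t = 0`
such an object is zero, and `t = r + 1` is the theorem. For the step, kill a nonzero
`f : E_t⟦m⟧ ⟶ X` by passing to its cone `Z`. As `E_t` is exceptional, a map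
`E_t⟦k⟧ ⟶ E_t⟦m + 1⟧` is zero or an isomorphism, and this makes `Hom(E_t⟦k⟧, Z)` a quotient of
`Hom(E_t⟦k⟧, X)`, strictly smaller for `k = m` since `f` dies; orthogonality to the later `E_j`
passes to `Z`. Hom-finiteness and boundedness make `∑ₖ dim Hom(E_t⟦k⟧, X)` finite, so after
finitely many cones the object is orthogonal to `E_t` as well.
-/

open CategoryTheory Category Limits Pretriangulated

namespace Stmt0

lemma finrank_lt_finrank_of_surjective {K V W : Type*} [Field K] [AddCommGroup V] [Module K V]
    [AddCommGroup W] [Module K W] [FiniteDimensional K V] {f : V →ₗ[K] W}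
    (hf : Function.Surjective f) {v : V} (hv : v ≠ 0) (hfv : f v = 0) :
    Module.finrank K W < Module.finrank K V := by
  have hker : 0 < Module.finrank K (LinearMap.ker f) :=
    Module.finrank_pos_iff_exists_ne_zero.2
      ⟨⟨v, LinearMap.mem_ker.2 hfv⟩, fun h => hv (congrArg Subtype.val h)⟩
  have := f.finrank_range_add_finrank_ker
  rw [LinearMap.range_eq_top.2 hf, finrank_top] at this
  omega

section Shift

variable {C : Type*} [Category C] [HasShift C ℤ] {A X Y : C}

lemma subsingleton_hom_shift_iff (k : ℤ) :
    Subsingleton (A⟦k⟧ ⟶ Y) ↔ Subsingleton (A ⟶ Y⟦-k⟧) :=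
  ((shiftEquiv C k).toAdjunction.homEquiv A Y).subsingleton_congr

lemma subsingleton_hom_shift_shift_iff (a b : ℤ) :
    Subsingleton (A⟦a⟧ ⟶ Y⟦b⟧) ↔ Subsingleton (A ⟶ Y⟦b - a⟧) := by
  rw [subsingleton_hom_shift_iff]
  exact ((Iso.refl A).homCongr
    ((shiftFunctorAdd' C b (-a) (b - a) (by omega)).app Y).symm).subsingleton_congr

/-- `X` lies in the right orthogonal `⟨A⟩^⊥` of the triangulated subcategory generated by `A`. -/
def ShiftOrthogonal (A X : C) : Prop := ∀ m : ℤ, Subsingleton (A⟦m⟧ ⟶ X)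

lemma shiftOrthogonal_iff : ShiftOrthogonal A X ↔ ∀ n : ℤ, Subsingleton (A ⟶ X⟦n⟧) := by
  refine ⟨fun h n => ?_, fun h m => (subsingleton_hom_shift_iff m).2 (h _)⟩
  simpa only [neg_neg] using (subsingleton_hom_shift_iff (-n)).1 (h (-n))

lemma ShiftOrthogonal.shift (h : ShiftOrthogonal A X) (n : ℤ) : ShiftOrthogonal A (X⟦n⟧) := by
  rw [shiftOrthogonal_iff] at h ⊢
  intro m
  exact ((Iso.refl A).homCongr ((shiftFunctorAdd C n m).app X)).subsingleton_congr.1 (h _)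

lemma exists_finset_subsingleton_hom_shift [HasZeroMorphisms C] {N : ℕ}
    (h : ∀ m : ℤ, N ≤ |m| → ∀ f : A ⟶ X⟦m⟧, f = 0) :
    ∃ s : Finset ℤ, ∀ k : ℤ, k ∉ s → Subsingleton (A⟦k⟧ ⟶ X) := by
  refine ⟨Finset.Ioo (-N) N, fun k hk => (subsingleton_hom_shift_iff k).2 ?_⟩
  refine subsingleton_of_forall_eq 0 (h _ ?_)
  rw [Finset.mem_Ioo] at hk
  rw [abs_neg, le_abs]
  omega

end Shift

section Brick

variable {D : Type*} [Category D]

/-- `A` is a brick (its endomorphism ring is a division ring) or `A = 0`. -/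
def IsBrick [HasZeroMorphisms D] (A : D) : Prop :=
  ∀ f : A ⟶ A, f ≠ 0 → IsIso f

variable [Preadditive D] {A : D}

lemma isBrick_of_forall_eq_smul_id {𝕜 : Type*} [Field 𝕜] [Linear 𝕜 D]
    (h : ∀ f : A ⟶ A, ∃ c : 𝕜, f = c • 𝟙 A) : IsBrick A := by
  intro f hf
  obtain ⟨c, rfl⟩ := h f
  have hc : c ≠ 0 := by rintro rfl; exact hf (zero_smul _ _)
  exact ⟨c⁻¹ • 𝟙 A, by simp [smul_smul, hc], by simp [smul_smul, hc]⟩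

lemma IsBrick.map {D' : Type*} [Category D'] [Preadditive D'] (F : D ⥤ D') [F.Full]
    [F.PreservesZeroMorphisms] (hA : IsBrick A) : IsBrick (F.obj A) := by
  intro f hf
  obtain ⟨g, rfl⟩ := F.map_surjective f
  have : IsIso g := hA g (by rintro rfl; exact hf (F.map_zero _ _))
  infer_instance

end Brick

section Preadditive

variable {C : Type*} [Category C] [Preadditive C] [HasShift C ℤ]
  [∀ n : ℤ, (shiftFunctor C n).Additive] {A : C}

lemma IsBrick.isIso_of_ne_zero (hA : IsBrick A)
    (hAA : ∀ n : ℤ, n ≠ 0 → Subsingleton (A ⟶ A⟦n⟧)) {a b : ℤ} (u : A⟦a⟧ ⟶ A⟦b⟧)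
    (hu : u ≠ 0) : IsIso u := by
  obtain rfl | hab := eq_or_ne a b
  · exact hA.map (shiftFunctor C a) u hu
  · have := (subsingleton_hom_shift_shift_iff a b).2 (hAA _ (sub_ne_zero.2 hab.symm))
    exact absurd (Subsingleton.elim u 0) hu

end Preadditive

variable {C : Type*} [Category C] [Preadditive C] [HasZeroObject C]
  [HasShift C ℤ] [∀ n : ℤ, (shiftFunctor C n).Additive] [Pretriangulated C]

/-- `genBy S` is the smallest class of objects containing `S` and closed under
isomorphisms, shifts, cones of morphisms (distinguished triangles) and direct
summands, i.e. the objects of the triangulated subcategory `⟨S⟩`. -/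
inductive genBy (S : Set C) : C → Prop
  | of {X : C} : X ∈ S → genBy S X
  | isoClosed {X Y : C} : (X ≅ Y) → genBy S X → genBy S Y
  | shift {X : C} (n : ℤ) : genBy S X → genBy S (X⟦n⟧)
  | ext {T : Triangle C} : (T ∈ distTriang C) → genBy S T.obj₁ → genBy S T.obj₂ →
      genBy S T.obj₃
  | summand {X Y : C} (i : X ⟶ Y) (p : Y ⟶ X) : i ≫ p = 𝟙 X → genBy S Y → genBy S X

namespace genBy

variable {S : Set C}

lemma ext₂ {T : Triangle C} (hT : T ∈ distTriang C) (h₁ : genBy S T.obj₁)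
    (h₃ : genBy S T.obj₃) : genBy S T.obj₂ :=
  isoClosed ((shiftFunctorCompIsoId C (1 : ℤ) (-1) (by ring)).app T.obj₂)
    (shift (-1) (ext (rot_of_distTriang _ (rot_of_distTriang _ hT)) h₃ (shift 1 h₁)))

lemma of_isZero {X Y : C} (hX : IsZero X) (hY : genBy S Y) : genBy S X :=
  summand 0 0 (hX.eq_of_src _ _) hY

end genBy

variable {A X : C}

lemma ShiftOrthogonal.obj₃ {T : Triangle C} (hT : T ∈ distTriang C)
    (h₁ : ShiftOrthogonal A (T.obj₁⟦(1 : ℤ)⟧)) (h₂ : ShiftOrthogonal A T.obj₂) :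
    ShiftOrthogonal A T.obj₃ := fun m => by
  have := h₁ m
  have := h₂ m
  refine ⟨fun w w' => ?_⟩
  obtain ⟨v, rfl⟩ := Triangle.coyoneda_exact₃ T hT w (Subsingleton.elim _ _)
  obtain ⟨v', rfl⟩ := Triangle.coyoneda_exact₃ T hT w' (Subsingleton.elim _ _)
  rw [Subsingleton.elim v v']

lemma exists_comp_eq_of_distTriang {P X Z Q : C} {f : P ⟶ X} {g : X ⟶ Z}
    {h : Z ⟶ P⟦(1 : ℤ)⟧} (hT : Triangle.mk f g h ∈ distTriang C) (hf : f ≠ 0)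
    (hQ : ∀ u : Q ⟶ P⟦(1 : ℤ)⟧, u ≠ 0 → Epi u) (w : Q ⟶ Z) : ∃ v, v ≫ g = w := by
  suffices hw : w ≫ h = 0 by
    obtain ⟨v, hv⟩ := Triangle.coyoneda_exact₃ _ hT w hw
    exact ⟨v, hv.symm⟩
  by_contra hw
  have := hQ _ hw
  have h31 : h ≫ f⟦(1 : ℤ)⟧' = 0 := comp_distTriang_mor_zero₃₁ _ hT
  have hf1 : f⟦(1 : ℤ)⟧' = 0 := by
    rw [← cancel_epi (w ≫ h), comp_zero, assoc, h31, comp_zero]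
  exact hf ((Functor.map_eq_zero_iff _).1 hf1)

lemma surjective_comp_of_distTriang (hA : IsBrick A)
    (hAA : ∀ n : ℤ, n ≠ 0 → Subsingleton (A ⟶ A⟦n⟧)) {m : ℤ} {Z : C} {f : A⟦m⟧ ⟶ X}
    {g : X ⟶ Z} {h : Z ⟶ A⟦m⟧⟦(1 : ℤ)⟧} (hT : Triangle.mk f g h ∈ distTriang C) (hf : f ≠ 0)
    (k : ℤ) : Function.Surjective fun v : A⟦k⟧ ⟶ X => v ≫ g := by
  refine exists_comp_eq_of_distTriang hT hf fun u hu => ?_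
  let e := (shiftFunctorAdd C m 1).app A
  have : IsIso (u ≫ e.inv) := hA.isIso_of_ne_zero hAA _
    (by rwa [Ne, Preadditive.IsIso.comp_right_eq_zero])
  have : IsIso u := IsIso.of_isIso_comp_right u e.inv
  infer_instance

theorem genBy_of_shiftOrthogonal_of_isBrick {𝕜 : Type*} [Field 𝕜] [Linear 𝕜 C]
    {S : Set C} (hAS : A ∈ S) (hA : IsBrick A)
    (hAA : ∀ n : ℤ, n ≠ 0 → Subsingleton (A ⟶ A⟦n⟧)) {𝓑 : Set C}
    (h𝓑A : ∀ B ∈ 𝓑, ShiftOrthogonal B A)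
    (hgen : ∀ Y, ShiftOrthogonal A Y → (∀ B ∈ 𝓑, ShiftOrthogonal B Y) → genBy S Y)
    (s : Finset ℤ) (hXs : ∀ k : ℤ, k ∉ s → Subsingleton (A⟦k⟧ ⟶ X))
    (hXfin : ∀ k : ℤ, FiniteDimensional 𝕜 (A⟦k⟧ ⟶ X)) (hX𝓑 : ∀ B ∈ 𝓑, ShiftOrthogonal B X) :
    genBy S X := by
  induction hn : ∑ k ∈ s, Module.finrank 𝕜 (A⟦k⟧ ⟶ X) using Nat.strong_induction_on
    generalizing X with
  | _ n ih =>
  by_cases hAX : ShiftOrthogonal A X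
  · exact hgen X hAX hX𝓑
  simp only [ShiftOrthogonal, not_forall, not_subsingleton_iff_nontrivial] at hAX
  obtain ⟨m, hm⟩ := hAX
  obtain ⟨f, hf⟩ := exists_ne (0 : A⟦m⟧ ⟶ X)
  obtain ⟨Z, g, h, hT⟩ := distinguished_cocone_triangle f
  have hsurj k : Function.Surjective (Linear.rightComp 𝕜 (A⟦k⟧) g) :=
    surjective_comp_of_distTriang hA hAA hT hf k
  have hZfin k : FiniteDimensional 𝕜 (A⟦k⟧ ⟶ Z) := Module.Finite.of_surjective _ (hsurj k)
  have hms : m ∈ s := by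
    by_contra hnot
    have := hXs m hnot
    exact hf (Subsingleton.elim _ _)
  have hlt : ∑ k ∈ s, Module.finrank 𝕜 (A⟦k⟧ ⟶ Z) < n := hn ▸ Finset.sum_lt_sum
    (fun k _ => LinearMap.finrank_le_finrank_of_surjective (hsurj k))
    ⟨m, hms, finrank_lt_finrank_of_surjective (hsurj m) hf (comp_distTriang_mor_zero₁₂ _ hT)⟩
  refine genBy.ext₂ hT (genBy.shift m (genBy.of hAS)) (ih _ hlt ?_ hZfin ?_ rfl)
  · intro k hk
    have := hXs k hk
    exact (hsurj k).subsingleton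
  · exact fun B hB => ShiftOrthogonal.obj₃ hT (((h𝓑A B hB).shift m).shift 1) (hX𝓑 B hB)

theorem genBy_of_shiftOrthogonal_of_le {𝕜 : Type*} [Field 𝕜] [Linear 𝕜 C] {r : ℕ}
    (E : Fin (r + 1) → C) (hbrick : ∀ i, IsBrick (E i))
    (hself : ∀ i, ∀ n : ℤ, n ≠ 0 → Subsingleton (E i ⟶ (E i)⟦n⟧))
    (hlt : ∀ i j, j < i → ShiftOrthogonal (E i) (E j))
    (hfin : ∀ i X (k : ℤ), FiniteDimensional 𝕜 ((E i)⟦k⟧ ⟶ X))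
    (hbdd : ∀ i X, ∃ s : Finset ℤ, ∀ k : ℤ, k ∉ s → Subsingleton ((E i)⟦k⟧ ⟶ X))
    (hperp : ∀ X, (∀ i, ShiftOrthogonal (E i) X) → IsZero X) (t : ℕ) (X : C)
    (hX : ∀ j : Fin (r + 1), t ≤ j → ShiftOrthogonal (E j) X) : genBy (Set.range E) X := by
  induction t generalizing X with
  | zero => exact genBy.of_isZero (hperp X fun j => hX j (Nat.zero_le _)) (genBy.of ⟨0, rfl⟩)
  | succ t ih =>
    by_cases ht : t < r + 1
    · let i : Fin (r + 1) := ⟨t, ht⟩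
      obtain ⟨s, hs⟩ := hbdd i X
      refine genBy_of_shiftOrthogonal_of_isBrick ⟨i, rfl⟩ (hbrick i) (hself i)
        (𝓑 := E '' Set.Ioi i) ?_ ?_ s hs (hfin i X) ?_
      · rintro _ ⟨j, hj, rfl⟩
        exact hlt j i hj
      · refine fun Y hYi hY𝓑 => ih Y fun j hj => ?_
        obtain rfl | hij := (show i ≤ j from hj).eq_or_lt
        · exact hYi
        · exact hY𝓑 _ ⟨j, hij, rfl⟩
      · rintro _ ⟨j, hj, rfl⟩
        exact hX j hj
    · exact ih X fun j hj => absurd j.isLt (by omega)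

/-- A strong exceptional collection whose right orthogonal complement vanishes is full. -/
theorem strong_exceptional_with_trivial_right_orthogonal_is_full
    [Linear ℂ C] {r : ℕ} (E : Fin (r + 1) → C)
    -- `Hom(E_k, E_k) = ℂ`
    (hEnd : ∀ i, ∀ f : E i ⟶ E i, ∃ c : ℂ, f = c • 𝟙 (E i))
    -- `Hom(E_k, E_j) = 0` for `k > j`
    (hHom : ∀ i j : Fin (r + 1), j < i → ∀ f : E i ⟶ E j, f = 0)
    -- `Hom^m(E_k, E_j) = 0` for all `k, j` and all `m ≠ 0` (strongness)
    (hExt : ∀ i j : Fin (r + 1), ∀ m : ℤ, m ≠ 0 → ∀ f : E i ⟶ (E j)⟦m⟧, f = 0)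
    -- the ambient category is Hom-finite and bounded (as is `D^b(X)`)
    (hFin : ∀ A B : C, FiniteDimensional ℂ (A ⟶ B))
    (hBdd : ∀ A B : C, ∃ N : ℕ, ∀ m : ℤ, (N : ℤ) ≤ |m| → ∀ f : A ⟶ B⟦m⟧, f = 0)
    -- `⟨E_0, …, E_r⟩^⊥ = 0`
    (hPerp : ∀ F : C, (∀ i : Fin (r + 1), ∀ m : ℤ, ∀ f : (E i)⟦m⟧ ⟶ F, f = 0) →
      IsZero F) :
    ∀ X : C, genBy (Set.range E) X := by
  have hlt i j (hji : j < i) : ShiftOrthogonal (E i) (E j) := by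
    rw [shiftOrthogonal_iff]
    intro n
    obtain rfl | hn := eq_or_ne n 0
    · exact ((Iso.refl _).homCongr ((shiftFunctorZero C ℤ).app (E j))).subsingleton_congr.2
        (subsingleton_of_forall_eq 0 (hHom i j hji))
    · exact subsingleton_of_forall_eq 0 (hExt i j n hn)
  have hbdd i X : ∃ s : Finset ℤ, ∀ k : ℤ, k ∉ s → Subsingleton ((E i)⟦k⟧ ⟶ X) :=
    (hBdd (E i) X).elim fun _ => exists_finset_subsingleton_hom_shift
  exact fun X => genBy_of_shiftOrthogonal_of_le E (fun i => isBrick_of_forall_eq_smul_id (hEnd i))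
    (fun i n hn => subsingleton_of_forall_eq 0 (hExt i i n hn)) hlt (fun _ _ _ => hFin _ _) hbdd
    (fun F hF => hPerp F fun i m f => (hF i m).elim f 0) (r + 1) X
    (fun j hj => absurd j.isLt (by omega))

end Stmt0
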